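/- Suppose ‖T(t,s)‖ ≤ Me^{λ̄|t−s|+ε|s|} for all t,s, and f satisfies (F3) (with η ≤ 1) and (F4). Define f_n(x) := φ(n+1,n;x) − T(n+1,n)x. Then there exists a constant B̃ > 0 such that ‖Df_n(x) − Df_n(y)‖ ≤ B̃e^{−ε|n|}‖x−y‖ for every n ∈ ℤ and all x,y ∈ ℝ^d. -/

import Mathlib

/-!
For fixed `n` and `z`, the variation-of-parameters formula makes `U r = Dφ(r, n; z)` a solution of
the linear Volterra equation `U r = T(r, n) + ∫_n^r T(r, s) Df(s, φ(s, n; z)) U s ds`. On the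
window `[n, n + 1]` the growth bound gives `‖T‖ ≲ e^{ε|n|}` and (F3) gives
`‖Df‖ ≲ e^{-3ε|n|}`, so Grönwall bounds `‖Dφ‖ ≲ e^{ε|n|}`, and `φ(s, n; ·)` is
`e^{ε|n|}`-Lipschitz by the mean value theorem. The integrands for `x` and `y` then differ by at
most `e^{-4ε|n|} e^{2ε|n|} ‖x - y‖ + ‖Df‖ ‖Dφ x - Dφ y‖` by (F4), and a second Grönwall argument
gives `‖Dφ x - Dφ y‖ ≲ e^{ε|n|} e^{-2ε|n|} ‖x - y‖ = e^{-ε|n|} ‖x - y‖`.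

The Volterra equation says nothing until its integrand is known to be integrable (otherwise the
integral is `0`); integrability comes from the bound together with measurability of
`s ↦ Dφ(s, n; z)`, a pointwise limit of difference quotients of `φ`.
-/

noncomputable section

/-- `ℝ^d` -/
abbrev Ed (d : ℕ) := Fin d → ℝ

open Set MeasureTheory Filter Topology Real

theorem le_mul_exp_of_le_add_mul_integral {g : ℝ → ℝ} {a b δ K : ℝ}
    (hg : ContinuousOn g (Icc a b)) (hK : 0 ≤ K)
    (hle : ∀ t ∈ Icc a b, g t ≤ δ + K * ∫ s in a..t, g s) :
    ∀ t ∈ Icc a b, g t ≤ δ * exp (K * (t - a)) := by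
  intro t ht
  have hab : a ≤ b := ht.1.trans ht.2
  have hint : IntervalIntegrable g volume a b := (uIcc_of_le hab ▸ hg).intervalIntegrable
  set v : ℝ → ℝ := fun u => ∫ s in a..u, g s
  have hv_cont : ContinuousOn v (Icc a b) := by
    simpa only [uIcc_of_le hab] using
      intervalIntegral.continuousOn_primitive_interval' hint left_mem_uIcc
  have hv_deriv : ∀ u ∈ Ico a b, HasDerivWithinAt v (g u) (Ici u) u := by
    intro u hu
    have hIcc : Icc a b ∈ 𝓝[>] u :=
      mem_of_superset (Icc_mem_nhdsGT hu.2) (Icc_subset_Icc_left hu.1)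
    exact intervalIntegral.integral_hasDerivWithinAt_right
      (hint.mono_set (uIcc_subset_uIcc left_mem_uIcc (Icc_subset_uIcc (Ico_subset_Icc_self hu))))
      ⟨Icc a b, hIcc, hg.aestronglyMeasurable measurableSet_Icc⟩
      ((hg u (Ico_subset_Icc_self hu)).mono_of_mem_nhdsWithin hIcc)
  have hv_le : ∀ u ∈ Icc a b, v u ≤ gronwallBound 0 K δ (u - a) :=
    le_gronwallBound_of_liminf_deriv_right_le hv_cont
      (fun u hu _ hr => (hv_deriv u hu).liminf_right_slope_le hr) (by simp [v])
      (fun u hu => by linarith [hle u (Ico_subset_Icc_self hu)])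
  calc g t ≤ δ + K * v t := hle t ht
    _ ≤ δ + K * gronwallBound 0 K δ (t - a) := by gcongr; exact hv_le t ht
    _ = δ * exp (K * (t - a)) := by
      rcases hK.eq_or_lt with rfl | hKpos
      · simp
      · rw [gronwallBound_of_K_ne_0 hKpos.ne']; field_simp; ring

theorem norm_le_of_eq_add_integral_mul {R : Type*} [NormedRing R] [NormedSpace ℝ R]
    {T : ℝ → ℝ → R} {c U G : ℝ → R} {a b C δ k c₀ : ℝ} (hC : 0 ≤ C) (hδ : 0 ≤ δ) (hk : 0 ≤ k)
    (hU_cont : ContinuousOn U (Icc a b))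
    (hU : ∀ r ∈ Icc a b, U r = c r + ∫ s in a..r, T r s * G s)
    (hc : ∀ r ∈ Icc a b, ‖c r‖ ≤ c₀) (hTC : ∀ r ∈ Icc a b, ∀ s ∈ Icc a b, ‖T r s‖ ≤ C)
    (hG : ∀ s ∈ Icc a b, ‖G s‖ ≤ δ + k * ‖U s‖) :
    ∀ r ∈ Icc a b, ‖U r‖ ≤ (c₀ + C * δ * (b - a)) * exp (C * k * (r - a)) := by
  refine le_mul_exp_of_le_add_mul_integral hU_cont.norm (mul_nonneg hC hk) fun r hr => ?_
  have hU_int : IntervalIntegrable (fun s => ‖U s‖) volume a r :=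
    (hU_cont.norm.mono (Icc_subset_Icc_right hr.2)).intervalIntegrable_of_Icc hr.1
  have hbound : ‖∫ s in a..r, T r s * G s‖ ≤ ∫ s in a..r, (C * δ + C * k * ‖U s‖) := by
    refine intervalIntegral.norm_integral_le_of_norm_le hr.1 (ae_of_all _ fun s hs => ?_)
      (intervalIntegrable_const.add (hU_int.const_mul _))
    have hs' : s ∈ Icc a b := ⟨hs.1.le, hs.2.trans hr.2⟩
    calc ‖T r s * G s‖ ≤ ‖T r s‖ * ‖G s‖ := norm_mul_le _ _
      _ ≤ C * (δ + k * ‖U s‖) := mul_le_mul (hTC r hr s hs') (hG s hs') (norm_nonneg _) hC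
      _ = C * δ + C * k * ‖U s‖ := by ring
  rw [intervalIntegral.integral_add intervalIntegrable_const (hU_int.const_mul _),
    intervalIntegral.integral_const, intervalIntegral.integral_const_mul, smul_eq_mul] at hbound
  have hlen : (r - a) * (C * δ) ≤ (b - a) * (C * δ) :=
    mul_le_mul_of_nonneg_right (by linarith [hr.2]) (mul_nonneg hC hδ)
  calc ‖U r‖ ≤ ‖c r‖ + ‖∫ s in a..r, T r s * G s‖ := by rw [hU r hr]; exact norm_add_le _ _
    _ ≤ c₀ + C * δ * (b - a) + C * k * ∫ s in a..r, ‖U s‖ := by linarith [hc r hr]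

structure IsEvolutionFamily {R : Type*} [Ring R] [TopologicalSpace R] (T : ℝ → ℝ → R) : Prop where
  self_eq_one : ∀ t, T t t = 1
  mul_eq : ∀ t s r, T t s * T s r = T t r
  continuous_left : ∀ s, Continuous fun t => T t s

namespace IsEvolutionFamily

variable {R : Type*} [NormedRing R] {T : ℝ → ℝ → R} {a b C k : ℝ}

theorem continuous_right [CompleteSpace R] (hT : IsEvolutionFamily T) (t : ℝ) :
    Continuous fun s => T t s := by
  let u : ℝ → Rˣ := fun s =>
    ⟨T s t, T t s, by rw [hT.mul_eq, hT.self_eq_one], by rw [hT.mul_eq, hT.self_eq_one]⟩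
  have hu : ∀ s, T t s = Ring.inverse (u s : R) := fun s => by rw [Ring.inverse_unit]; rfl
  refine continuous_iff_continuousAt.2 fun s => ?_
  simp_rw [hu]
  exact (NormedRing.inverse_continuousAt (u s)).comp (f := fun s => T s t)
    (hT.continuous_left t).continuousAt

theorem intervalIntegrable_mul [CompleteSpace R] (hT : IsEvolutionFamily T) {G : ℝ → R}
    (hG : IntervalIntegrable G volume a b) (t : ℝ) :
    IntervalIntegrable (fun s => T t s * G s) volume a b :=
  hG.continuousOn_mul (hT.continuous_right t).continuousOn

theorem intervalIntegrable_of_mul (hT : IsEvolutionFamily T) {G : ℝ → R} {t : ℝ}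
    (hG : IntervalIntegrable (fun s => T t s * G s) volume a b) :
    IntervalIntegrable G volume a b := by
  simpa only [← mul_assoc, hT.mul_eq, hT.self_eq_one, one_mul] using
    hG.continuousOn_mul (hT.continuous_left t).continuousOn

theorem integral_mul [NormedAlgebra ℝ R] [CompleteSpace R] (hT : IsEvolutionFamily T)
    {G : ℝ → R} (hG : IntervalIntegrable G volume a b) :
    ∫ s in a..b, T b s * G s = T b a * ∫ s in a..b, T a s * G s := by
  have hsplit : ∀ s, T b s * G s = T b a * (T a s * G s) := fun s => by
    rw [← mul_assoc, hT.mul_eq]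
  simp_rw [hsplit]
  exact (ContinuousLinearMap.mul ℝ R (T b a)).intervalIntegral_comp_comm
    (hT.intervalIntegrable_mul hG a)

theorem continuousOn_of_eq_add_integral [NormedAlgebra ℝ R] [CompleteSpace R]
    (hT : IsEvolutionFamily T) {U G : ℝ → R}
    (hU : ∀ r ∈ Icc a b, U r = T r a + ∫ s in a..r, T r s * G s)
    (hG : IntervalIntegrable G volume a b) : ContinuousOn U (Icc a b) := by
  have hprim : ContinuousOn (fun r => ∫ s in a..r, T a s * G s) (Icc a b) :=
    (intervalIntegral.continuousOn_primitive_interval' (hT.intervalIntegrable_mul hG a)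
      left_mem_uIcc).mono Icc_subset_uIcc
  have hTa := (hT.continuous_left a).continuousOn (s := Icc a b)
  refine (hTa.add (hTa.mul hprim)).congr fun r hr => ?_
  rw [hU r hr, hT.integral_mul (hG.mono_set (uIcc_subset_uIcc left_mem_uIcc (Icc_subset_uIcc hr)))]
  rfl

theorem norm_le_of_eq_add_integral [NormedAlgebra ℝ R] [CompleteSpace R]
    (hT : IsEvolutionFamily T) {U G : ℝ → R} (hC : 0 ≤ C) (hk : 0 ≤ k)
    (hU : ∀ r ∈ Icc a b, U r = T r a + ∫ s in a..r, T r s * G s)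
    (hTC : ∀ r ∈ Icc a b, ∀ s ∈ Icc a b, ‖T r s‖ ≤ C) (hG : ∀ s ∈ Icc a b, ‖G s‖ ≤ k * ‖U s‖) :
    ∀ r ∈ Icc a b, ‖U r‖ ≤ C * exp (C * k * (r - a)) := by
  intro r hr
  have har : a ∈ Icc a b := left_mem_Icc.2 (hr.1.trans hr.2)
  by_cases hint : IntervalIntegrable G volume a r
  · have hsub : Icc a r ⊆ Icc a b := Icc_subset_Icc_right hr.2
    have hUr : ∀ r' ∈ Icc a r, U r' = T r' a + ∫ s in a..r', T r' s * G s :=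
      fun r' hr' => hU r' (hsub hr')
    simpa using norm_le_of_eq_add_integral_mul (c₀ := C) hC le_rfl hk
      (hT.continuousOn_of_eq_add_integral hUr hint) hUr (fun r' hr' => hTC r' (hsub hr') a har)
      (fun r' hr' s hs => hTC r' (hsub hr') s (hsub hs)) (fun s hs => by simpa using hG s (hsub hs))
      r (right_mem_Icc.2 hr.1)
  · -- without integrability the integral takes its junk value `0`
    have hzero : ∫ s in a..r, T r s * G s = 0 :=
      intervalIntegral.integral_undef fun h => hint (hT.intervalIntegrable_of_mul h)
    rw [hU r hr, hzero, add_zero]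
    exact (hTC r hr a har).trans
      (le_mul_of_one_le_right hC (one_le_exp (mul_nonneg (mul_nonneg hC hk) (by linarith [hr.1]))))

theorem norm_sub_le_of_eq_add_integral [NormedAlgebra ℝ R] [CompleteSpace R]
    (hT : IsEvolutionFamily T) {U₁ U₂ G₁ G₂ : ℝ → R} {δ : ℝ} (hC : 0 ≤ C) (hδ : 0 ≤ δ) (hk : 0 ≤ k)
    (hU₁ : ∀ r ∈ Icc a b, U₁ r = T r a + ∫ s in a..r, T r s * G₁ s)
    (hU₂ : ∀ r ∈ Icc a b, U₂ r = T r a + ∫ s in a..r, T r s * G₂ s)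
    (hG₁ : IntervalIntegrable G₁ volume a b) (hG₂ : IntervalIntegrable G₂ volume a b)
    (hTC : ∀ r ∈ Icc a b, ∀ s ∈ Icc a b, ‖T r s‖ ≤ C)
    (hG : ∀ s ∈ Icc a b, ‖G₁ s - G₂ s‖ ≤ δ + k * ‖U₁ s - U₂ s‖) :
    ∀ r ∈ Icc a b, ‖U₁ r - U₂ r‖ ≤ C * δ * (b - a) * exp (C * k * (r - a)) := by
  have hU : ∀ r ∈ Icc a b, (U₁ - U₂) r = 0 + ∫ s in a..r, T r s * (G₁ - G₂) s := by
    intro r hr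
    have hsub := uIcc_subset_uIcc left_mem_uIcc (Icc_subset_uIcc hr)
    simp only [Pi.sub_apply, mul_sub, zero_add]
    rw [intervalIntegral.integral_sub (hT.intervalIntegrable_mul (hG₁.mono_set hsub) r)
      (hT.intervalIntegrable_mul (hG₂.mono_set hsub) r), hU₁ r hr, hU₂ r hr,
      add_sub_add_left_eq_sub]
  simpa using norm_le_of_eq_add_integral_mul (c₀ := 0) hC hδ hk
    ((hT.continuousOn_of_eq_add_integral hU₁ hG₁).sub (hT.continuousOn_of_eq_add_integral hU₂ hG₂))
    hU (by simp) hTC hG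

end IsEvolutionFamily

theorem abs_sub_le_one_of_mem_Icc {a u v : ℝ} (hu : u ∈ Icc a (a + 1)) (hv : v ∈ Icc a (a + 1)) :
    |u - v| ≤ 1 := by
  simpa [Real.dist_eq] using Real.dist_le_of_mem_Icc hu hv

theorem norm_evolution_le_of_mem_Icc {X : Type*} [Norm X] {T : ℝ → ℝ → X}
    {M lam eps a t s : ℝ} (hM : 0 ≤ M) (hlam : 0 ≤ lam) (heps : 0 ≤ eps)
    (hgrowth : ∀ t s, ‖T t s‖ ≤ M * exp (lam * |t - s| + eps * |s|))
    (ht : t ∈ Icc a (a + 1)) (hs : s ∈ Icc a (a + 1)) :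
    ‖T t s‖ ≤ M * exp (lam + eps + eps * |a|) := by
  have hsa : |s| ≤ |a| + 1 := by
    linarith [abs_sub_abs_le_abs_sub s a,
      abs_sub_le_one_of_mem_Icc hs (left_mem_Icc.2 (by linarith))]
  refine (hgrowth t s).trans (mul_le_mul_of_nonneg_left (exp_le_exp.2 ?_) hM)
  nlinarith [mul_le_mul_of_nonneg_left (abs_sub_le_one_of_mem_Icc ht hs) hlam,
    mul_le_mul_of_nonneg_left hsa heps]

theorem exp_neg_mul_mul_abs_le_of_mem_Icc {m eps a s : ℝ} (hm : 0 ≤ m) (heps : 0 ≤ eps)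
    (hs : s ∈ Icc a (a + 1)) : exp (-m * eps * |s|) ≤ exp (m * eps - m * eps * |a|) := by
  have has : |a| ≤ |s| + 1 := by
    linarith [abs_sub_abs_le_abs_sub a s,
      abs_sub_le_one_of_mem_Icc (left_mem_Icc.2 (by linarith)) hs]
  exact exp_le_exp.2 (by nlinarith [mul_le_mul_of_nonneg_left has (mul_nonneg hm heps)])

theorem measurable_continuousLinearMap_of_forall_apply {α ι F : Type*} [MeasurableSpace α]
    [Fintype ι] [NormedAddCommGroup F] [NormedSpace ℝ F] [MeasurableSpace F] [BorelSpace F]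
    [SecondCountableTopology F] {u : α → (ι → ℝ) →L[ℝ] F}
    (h : ∀ v, Measurable fun s => u s v) : Measurable u := by
  classical
  let e := ContinuousLinearEquiv.piRing (𝕜 := ℝ) (E := F) ι
  have he : Measurable fun s => e (u s) := measurable_pi_lambda _ fun i => h (Pi.single i 1)
  simpa [Function.comp_def] using e.symm.continuous.measurable.comp he

theorem measurable_apply_of_hasFDerivAt {α E F : Type*} [MeasurableSpace α]
    [NormedAddCommGroup E] [NormedSpace ℝ E] [NormedAddCommGroup F] [NormedSpace ℝ F]
    [MeasurableSpace F] [BorelSpace F] [SecondCountableTopology F]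
    {φ : α → E → F} {D : α → E →L[ℝ] F} {z : E} (hφ : ∀ w, Measurable fun s => φ s w)
    (hD : ∀ s, HasFDerivAt (φ s) (D s) z) (v : E) : Measurable fun s => D s v :=
  measurable_of_tendsto_metrizable
    (fun n : ℕ => (((hφ _).sub (hφ z)).const_smul (n : ℝ)))
    (tendsto_pi_nhds.2 fun s => ((hD s).lim_real v).comp tendsto_natCast_atTop_atTop)

section LinearizedFlow

variable {d : ℕ} {T : ℝ → ℝ → Ed d →L[ℝ] Ed d} {Df : ℝ → Ed d → Ed d →L[ℝ] Ed d}
  {φ : ℝ → Ed d → Ed d} {Dφ : ℝ → Ed d → Ed d →L[ℝ] Ed d} {a b C k L : ℝ}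

theorem intervalIntegrable_mul_fderiv (hDf_cont : Continuous fun p : ℝ × Ed d => Df p.1 p.2)
    (hφ_cont : ∀ z, Continuous fun s => φ s z) (hφ_diff : ∀ s z, HasFDerivAt (φ s) (Dφ s z) z)
    (hab : a ≤ b) {z : Ed d} {K : ℝ} (hbound : ∀ s ∈ Icc a b, ‖Df s (φ s z) * Dφ s z‖ ≤ K) :
    IntervalIntegrable (fun s => Df s (φ s z) * Dφ s z) volume a b := by
  have hDφ : Measurable fun s => Dφ s z := measurable_continuousLinearMap_of_forall_apply
    (measurable_apply_of_hasFDerivAt (fun w => (hφ_cont w).measurable) fun s => hφ_diff s z)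
  have hDf : Continuous fun s => Df s (φ s z) := hDf_cont.comp (continuous_id.prodMk (hφ_cont z))
  rw [intervalIntegrable_iff_integrableOn_Ioc_of_le hab]
  exact Measure.integrableOn_of_bounded measure_Ioc_lt_top.ne
    (hDf.measurable.mul hDφ).aestronglyMeasurable
    ((ae_restrict_iff' measurableSet_Ioc).2
      (ae_of_all _ fun s hs => hbound s (Ioc_subset_Icc_self hs)))

theorem norm_sub_fderiv_flow_le (hT : IsEvolutionFamily T) (hC : 0 ≤ C) (hk : 0 ≤ k)
    (hL : 0 ≤ L) (hab : a ≤ b) (hTC : ∀ r ∈ Icc a b, ∀ s ∈ Icc a b, ‖T r s‖ ≤ C)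
    (hDf_cont : Continuous fun p : ℝ × Ed d => Df p.1 p.2)
    (hDf : ∀ s ∈ Icc a b, ∀ p, ‖Df s p‖ ≤ k)
    (hDf_lip : ∀ s ∈ Icc a b, ∀ p q, ‖Df s p - Df s q‖ ≤ L * ‖p - q‖)
    (hφ_cont : ∀ z, Continuous fun s => φ s z) (hφ_diff : ∀ s z, HasFDerivAt (φ s) (Dφ s z) z)
    (hDvop : ∀ r z, Dφ r z = T r a + ∫ s in a..r, T r s * (Df s (φ s z) * Dφ s z))
    (x y : Ed d) :
    ‖Dφ b x - Dφ b y‖ ≤ L * (b - a) * (C * exp (C * k * (b - a))) ^ 3 * ‖x - y‖ := by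
  set C₁ := C * exp (C * k * (b - a)) with hC₁
  have hbound : ∀ z, ∀ s ∈ Icc a b, ‖Dφ s z‖ ≤ C₁ := fun z s hs =>
    (hT.norm_le_of_eq_add_integral hC hk (fun r _ => hDvop r z) hTC
      (fun s hs => (norm_mul_le _ _).trans
        (mul_le_mul_of_nonneg_right (hDf s hs _) (norm_nonneg _)))
      s hs).trans (by rw [hC₁]; gcongr; exact hs.2)
  have hint : ∀ z, IntervalIntegrable (fun s => Df s (φ s z) * Dφ s z) volume a b := fun z =>
    intervalIntegrable_mul_fderiv hDf_cont hφ_cont hφ_diff hab fun s hs =>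
      (norm_mul_le _ _).trans (mul_le_mul (hDf s hs _) (hbound z s hs) (norm_nonneg _) hk)
  have hlip : ∀ s ∈ Icc a b, ‖φ s x - φ s y‖ ≤ C₁ * ‖x - y‖ := fun s hs => by
    simpa using convex_univ.norm_image_sub_le_of_norm_hasFDerivWithin_le
      (fun z _ => (hφ_diff s z).hasFDerivWithinAt) (fun z _ => hbound z s hs) (mem_univ y)
      (mem_univ x)
  have hdiff : ∀ s ∈ Icc a b, ‖Df s (φ s x) * Dφ s x - Df s (φ s y) * Dφ s y‖ ≤
      L * C₁ ^ 2 * ‖x - y‖ + k * ‖Dφ s x - Dφ s y‖ := by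
    intro s hs
    rw [show Df s (φ s x) * Dφ s x - Df s (φ s y) * Dφ s y =
      (Df s (φ s x) - Df s (φ s y)) * Dφ s x + Df s (φ s y) * (Dφ s x - Dφ s y) by
        rw [sub_mul, mul_sub]; abel]
    calc _ ≤ ‖Df s (φ s x) - Df s (φ s y)‖ * ‖Dφ s x‖ + ‖Df s (φ s y)‖ * ‖Dφ s x - Dφ s y‖ :=
          (norm_add_le _ _).trans (add_le_add (norm_mul_le _ _) (norm_mul_le _ _))
      _ ≤ L * (C₁ * ‖x - y‖) * C₁ + k * ‖Dφ s x - Dφ s y‖ := by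
          gcongr
          · exact (hDf_lip s hs _ _).trans (by gcongr; exact hlip s hs)
          · exact hbound x s hs
          · exact hDf s hs _
      _ = L * C₁ ^ 2 * ‖x - y‖ + k * ‖Dφ s x - Dφ s y‖ := by ring
  calc ‖Dφ b x - Dφ b y‖
      ≤ C * (L * C₁ ^ 2 * ‖x - y‖) * (b - a) * exp (C * k * (b - a)) :=
        hT.norm_sub_le_of_eq_add_integral hC (by positivity) hk (fun r _ => hDvop r x)
          (fun r _ => hDvop r y) (hint x) (hint y) hTC hdiff b (right_mem_Icc.2 hab)
    _ = L * (b - a) * C₁ ^ 3 * ‖x - y‖ := by rw [hC₁]; ring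

theorem norm_sub_fderiv_flow_le_of_growth (hT : IsEvolutionFamily T) {M lam eps η B : ℝ}
    (hM : 0 ≤ M) (hlam : 0 ≤ lam) (heps : 0 ≤ eps) (hη : 0 ≤ η) (hB : 0 ≤ B)
    (hgrowth : ∀ t s, ‖T t s‖ ≤ M * exp (lam * |t - s| + eps * |s|))
    (hDf_cont : Continuous fun p : ℝ × Ed d => Df p.1 p.2)
    (hF3 : ∀ t x, ‖Df t x‖ ≤ η * exp (-3 * eps * |t|))
    (hF4 : ∀ t x y, ‖Df t x - Df t y‖ ≤ B * exp (-4 * eps * |t|) * ‖x - y‖)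
    (hφ_cont : ∀ z, Continuous fun s => φ s z) (hφ_diff : ∀ s z, HasFDerivAt (φ s) (Dφ s z) z)
    (hDvop : ∀ r z, Dφ r z = T r a + ∫ s in a..r, T r s * (Df s (φ s z) * Dφ s z))
    (x y : Ed d) :
    ‖Dφ (a + 1) x - Dφ (a + 1) y‖ ≤
      B * exp (4 * eps) * (M * exp (lam + eps) * exp (M * η * exp (lam + 4 * eps))) ^ 3 *
        exp (-eps * |a|) * ‖x - y‖ := by
  have hwindow := norm_sub_fderiv_flow_le hT (C := M * exp (lam + eps + eps * |a|))
    (k := η * exp (3 * eps - 3 * eps * |a|)) (L := B * exp (4 * eps - 4 * eps * |a|))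
    (by positivity) (by positivity) (by positivity) (by linarith : a ≤ a + 1)
    (fun r hr s hs => norm_evolution_le_of_mem_Icc hM hlam heps hgrowth hr hs) hDf_cont
    (fun s hs p => (hF3 s p).trans (mul_le_mul_of_nonneg_left
      (exp_neg_mul_mul_abs_le_of_mem_Icc (by norm_num) heps hs) hη))
    (fun s hs p q => (hF4 s p q).trans (mul_le_mul_of_nonneg_right (mul_le_mul_of_nonneg_left
      (exp_neg_mul_mul_abs_le_of_mem_Icc (by norm_num) heps hs) hB) (norm_nonneg _)))
    hφ_cont hφ_diff hDvop x y
  have hCk : M * exp (lam + eps + eps * |a|) * (η * exp (3 * eps - 3 * eps * |a|)) ≤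
      M * η * exp (lam + 4 * eps) := by
    rw [mul_mul_mul_comm, ← exp_add]
    exact mul_le_mul_of_nonneg_left (exp_le_exp.2 (by nlinarith [abs_nonneg a])) (by positivity)
  have hexp : exp (4 * eps - 4 * eps * |a|) * exp (lam + eps + eps * |a|) ^ 3 =
      exp (4 * eps) * exp (lam + eps) ^ 3 * exp (-eps * |a|) := by
    simp only [← exp_nat_mul, ← exp_add]; ring_nf
  calc _ ≤ _ := hwindow
    _ ≤ B * exp (4 * eps - 4 * eps * |a|) *
          (M * exp (lam + eps + eps * |a|) * exp (M * η * exp (lam + 4 * eps))) ^ 3 * ‖x - y‖ := by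
        rw [add_sub_cancel_left, mul_one, mul_one]
        gcongr
    _ = _ := by
        rw [mul_pow, mul_pow, mul_pow, mul_pow]
        linear_combination B * M ^ 3 * exp (M * η * exp (lam + 4 * eps)) ^ 3 * ‖x - y‖ * hexp

end LinearizedFlow

theorem discretized_perturbation_derivative_lipschitz_general (d : ℕ)
    -- the linear equation x' = A(t)x and its evolution family T(t,s)
    (A : ℝ → Ed d →L[ℝ] Ed d) (T : ℝ → ℝ → Ed d →L[ℝ] Ed d)
    (hT_id : ∀ t, T t t = ContinuousLinearMap.id ℝ (Ed d))
    (hT_comp : ∀ t s r, (T t s).comp (T s r) = T t r)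
    (hT_deriv : ∀ s x t, HasDerivAt (fun τ => T τ s x) (A t (T t s x)) t)
    (M lamBar eps η : ℝ) (hM : 0 < M) (hlamBar : 0 < lamBar) (heps : 0 ≤ eps)
    (hη : 0 < η)
    (hgrowth : ∀ t s, ‖T t s‖ ≤ M * Real.exp (lamBar * |t - s| + eps * |s|))
    -- the perturbation f, continuous, C¹ in x with jointly continuous derivative
    (f : ℝ → Ed d → Ed d) (Df : ℝ → Ed d → (Ed d →L[ℝ] Ed d))
    (hDf_cont : Continuous (fun p : ℝ × Ed d => Df p.1 p.2))
    -- (F3) and (F4)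
    (B : ℝ) (hB : 0 < B)
    (hF3 : ∀ t x, ‖Df t x‖ ≤ η * Real.exp (-3 * eps * |t|))
    (hF4 : ∀ t x y, ‖Df t x - Df t y‖ ≤ B * Real.exp (-4 * eps * |t|) * ‖x - y‖)
    -- φ(t,t₀;x): the globally defined solution of x' = A(t)x + f(t,x), C¹ in x,
    -- satisfying the variation-of-parameters formula
    (φ : ℝ → ℝ → Ed d → Ed d) (Dφ : ℝ → ℝ → Ed d → (Ed d →L[ℝ] Ed d))
    (hφ_sol : ∀ t₀ x t, HasDerivAt (fun τ => φ τ t₀ x) (A t (φ t t₀ x) + f t (φ t t₀ x)) t)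
    (hφ_diff : ∀ t t₀ x, HasFDerivAt (φ t t₀) (Dφ t t₀ x) x)
    (hDvop : ∀ t t₀ x, Dφ t t₀ x =
      T t t₀ + ∫ s in t₀..t, (T t s).comp ((Df s (φ s t₀ x)).comp (Dφ s t₀ x))) :
    -- then there is B̃ > 0 with ‖Df_n(x) − Df_n(y)‖ ≤ B̃ e^{−ε|n|} ‖x−y‖, where
    -- Df_n(x) = D_xφ(n+1,n;x) − T(n+1,n) so that Df_n(x) − Df_n(y) is the
    -- difference of the derivatives of the solution map
    ∃ Bt : ℝ, 0 < Bt ∧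
      ∀ (n : ℤ) (x y : Ed d),
        ‖Dφ ((n : ℝ) + 1) (n : ℝ) x - Dφ ((n : ℝ) + 1) (n : ℝ) y‖ ≤
          Bt * Real.exp (-eps * |(n : ℝ)|) * ‖x - y‖ := by
  have hT : IsEvolutionFamily T := ⟨hT_id, hT_comp, fun s => continuous_clm_apply.2 fun v =>
    continuous_iff_continuousAt.2 fun t => (hT_deriv s v t).continuousAt⟩
  refine ⟨_, ?_, fun n x y => norm_sub_fderiv_flow_le_of_growth hT hM.le hlamBar.le heps hη.le
    hB.le hgrowth hDf_cont hF3 hF4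
    (fun z => continuous_iff_continuousAt.2 fun s => (hφ_sol n z s).continuousAt)
    (fun s z => hφ_diff s n z) (fun r z => hDvop r n z) x y⟩
  positivity

theorem discretized_perturbation_derivative_lipschitz (d : ℕ)
    -- the linear equation x' = A(t)x and its evolution family T(t,s)
    (A : ℝ → Ed d →L[ℝ] Ed d) (T : ℝ → ℝ → Ed d →L[ℝ] Ed d)
    (hT_id : ∀ t, T t t = ContinuousLinearMap.id ℝ (Ed d))
    (hT_comp : ∀ t s r, (T t s).comp (T s r) = T t r)
    (hT_deriv : ∀ s x t, HasDerivAt (fun τ => T τ s x) (A t (T t s x)) t)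
    (M lamBar eps η : ℝ) (hM : 0 < M) (hlamBar : 0 < lamBar) (heps : 0 ≤ eps)
    (hη : 0 < η) (hη1 : η ≤ 1)
    (hgrowth : ∀ t s, ‖T t s‖ ≤ M * Real.exp (lamBar * |t - s| + eps * |s|))
    -- the perturbation f, continuous, C¹ in x with jointly continuous derivative
    (f : ℝ → Ed d → Ed d) (Df : ℝ → Ed d → (Ed d →L[ℝ] Ed d))
    (hf_cont : Continuous (fun p : ℝ × Ed d => f p.1 p.2))
    (hf_diff : ∀ t x, HasFDerivAt (f t) (Df t x) x)
    (hDf_cont : Continuous (fun p : ℝ × Ed d => Df p.1 p.2))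
    -- (F3) and (F4)
    (B : ℝ) (hB : 0 < B)
    (hF3 : ∀ t x, ‖Df t x‖ ≤ η * Real.exp (-3 * eps * |t|))
    (hF4 : ∀ t x y, ‖Df t x - Df t y‖ ≤ B * Real.exp (-4 * eps * |t|) * ‖x - y‖)
    -- φ(t,t₀;x): the globally defined solution of x' = A(t)x + f(t,x), C¹ in x,
    -- satisfying the variation-of-parameters formula
    (φ : ℝ → ℝ → Ed d → Ed d) (Dφ : ℝ → ℝ → Ed d → (Ed d →L[ℝ] Ed d))
    (hφ_init : ∀ t₀ x, φ t₀ t₀ x = x)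
    (hφ_sol : ∀ t₀ x t, HasDerivAt (fun τ => φ τ t₀ x) (A t (φ t t₀ x) + f t (φ t t₀ x)) t)
    (hφ_diff : ∀ t t₀ x, HasFDerivAt (φ t t₀) (Dφ t t₀ x) x)
    (hDvop : ∀ t t₀ x, Dφ t t₀ x =
      T t t₀ + ∫ s in t₀..t, (T t s).comp ((Df s (φ s t₀ x)).comp (Dφ s t₀ x))) :
    -- then there is B̃ > 0 with ‖Df_n(x) − Df_n(y)‖ ≤ B̃ e^{−ε|n|} ‖x−y‖, where
    -- Df_n(x) = D_xφ(n+1,n;x) − T(n+1,n) so that Df_n(x) − Df_n(y) is the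
    -- difference of the derivatives of the solution map
    ∃ Bt : ℝ, 0 < Bt ∧
      ∀ (n : ℤ) (x y : Ed d),
        ‖Dφ ((n : ℝ) + 1) (n : ℝ) x - Dφ ((n : ℝ) + 1) (n : ℝ) y‖ ≤
          Bt * Real.exp (-eps * |(n : ℝ)|) * ‖x - y‖ :=
  discretized_perturbation_derivative_lipschitz_general d A T hT_id hT_comp hT_deriv M lamBar eps η
    hM hlamBar heps hη hgrowth f Df hDf_cont B hB hF3 hF4 φ Dφ hφ_sol hφ_diff hDvop

end
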